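/- Assume that the directions within each of the two lists commute pointwise, i.e. for every u, i_l(u)·i_k(u) = i_k(u)·i_l(u) whenever l, k ≤ μ and whenever l, k > μ (cross commutativity between the lists is not required), and that each ρ_l(x,u) is linear in x. Let C, B : ℝ^m → 𝔸 be Bochner integrable and A = C⋆B. Then for every u ∈ ℝ^m: F_{F_1,F_2}(A)(u) = Σ_{j′∈{0,1}^μ} Σ_{k′∈{0,1}^{ν−μ}} (F_{F_1,F_2(k′)}(C)(u))_{c^{j′}(F_1)} · F_{F_1(j′),F_2}(B_{c^{k′}(F_2)})(u), and also F_{F_1,F_2}(A)(u) = Σ_{j′∈{0,1}^μ} Σ_{k′∈{0,1}^{ν−μ}} F_{F_1,F_2(k′)}(C_{c^{j′}(F_1)})(u) · (F_{F_1(j′),F_2}(B)(u))_{c^{k′}(F_2)}. -/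

import Mathlib

/-!
Linearity of the coefficients and commutativity inside each list make the kernels multiplicative,
`K(x + y) = K(y) K(x)`, so Fubini and a translation turn the transform of `C ⋆ B` into
`∫∫ K₁(y) K₁(x) C(y) B(x) K₂(y) K₂(x) dx dy`. Each element splits as `X = ∑_j X_{c^j}`, and the
part `X_{c^j}` anticommutes with exactly those directions `i_l` with `j_l = 1`; hence moving it
past a kernel flips the signs of the corresponding coefficients. Moving `K₂(y)` to the left of
`B(x)` and `K₁(x)` to the right of `C(y)` (in one order or the other) separates the variables,
and the double integral factors into the two sums of products.
-/

noncomputable section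
open MeasureTheory

variable {𝔸 : Type*} [NormedRing 𝔸] [NormedAlgebra ℝ 𝔸] [CompleteSpace 𝔸]

/-- The commutative (`s = 0`) and anticommutative (`s = 1`) part of `A` with respect to an
invertible element `E`: `A_{c^s(E)} = ½(A + (−1)^s E⁻¹AE)`. -/
def cPart (E : 𝔸) (s : Fin 2) (A : 𝔸) : 𝔸 :=
  (2 : ℝ)⁻¹ • (A + (-1 : 𝔸) ^ (s : ℕ) * (Ring.inverse E * A * E))

/-- The iterated decomposition of `A` with respect to a list of invertible elements
with attached multi-index bits. -/
def cIter (L : List (𝔸 × Fin 2)) (A : 𝔸) : 𝔸 :=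
  L.foldl (fun acc p => cPart p.1 p.2 acc) A

/-- The ordered product `g 0 * g 1 * ⋯ * g (d−1)`, factors in increasing order of the index. -/
def oprod {d : ℕ} (g : Fin d → 𝔸) : 𝔸 :=
  (List.ofFn g).prod

/-- The geometric Fourier transform with separable linear blade functions
`f¹_l(x,u) = ρ1_l(x,u)·i1_l(u)` (left kernel) and `f²_l(x,u) = ρ2_l(x,u)·i2_l(u)`
(right kernel). -/
def gft {m μ ν' : ℕ}
    (ρ1 : Fin μ → (Fin m → ℝ) → (Fin m → ℝ) → ℝ) (i1 : Fin μ → (Fin m → ℝ) → 𝔸)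
    (ρ2 : Fin ν' → (Fin m → ℝ) → (Fin m → ℝ) → ℝ) (i2 : Fin ν' → (Fin m → ℝ) → 𝔸)
    (A : (Fin m → ℝ) → 𝔸) (u : Fin m → ℝ) : 𝔸 :=
  ∫ x : Fin m → ℝ,
    oprod (fun l => NormedSpace.exp (-(ρ1 l x u • i1 l u))) * A x *
      oprod (fun l => NormedSpace.exp (-(ρ2 l x u • i2 l u)))

theorem Commute.ringInverse_left {M₀ : Type*} [MonoidWithZero M₀] {a b : M₀} (h : Commute a b) :
    Commute (Ring.inverse a) b := by
  by_cases ha : IsUnit a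
  · obtain ⟨u, rfl⟩ := ha
    rw [Ring.inverse_unit]
    exact h.units_inv_left
  · rw [Ring.inverse_non_unit _ ha]
    exact Commute.zero_left b

theorem Ring.inverse_eq_neg_of_sq_eq_neg_one {R : Type*} [Ring R] {E : R} (hE : E ^ 2 = -1) :
    Ring.inverse E = -E := by
  have hEE : E * E = -1 := by rw [← sq, hE]
  exact Ring.inverse_unit ⟨E, -E, by simp [hEE], by simp [hEE]⟩

section SqrtNegOne

variable {R : Type*} [NormedRing R] [NormedAlgebra ℝ R]

theorem NormedSpace.exp_smul_of_sq_eq_neg_one {E : R} (hE : E ^ 2 = -1) (r : ℝ) :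
    NormedSpace.exp (r • E) = Real.cos r • (1 : R) + Real.sin r • E := by
  let : NormedAlgebra ℚ R := .restrictScalars ℚ ℝ R
  let φ : ℂ →ₐ[ℝ] R := Complex.lift ⟨E, by rw [← sq, hE]⟩
  have hφ : Continuous φ := φ.toLinearMap.continuous_of_finiteDimensional
  have h := NormedSpace.map_exp φ hφ (r * Complex.I)
  rw [← Complex.exp_eq_exp_ℂ, Complex.exp_mul_I] at h
  simpa [φ, Complex.lift_apply, Algebra.algebraMap_eq_smul_one, Complex.cos_ofReal_re,
    Complex.sin_ofReal_re] using h.symm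

theorem NormedSpace.norm_exp_smul_le_of_sq_eq_neg_one {E : R} (hE : E ^ 2 = -1) (r : ℝ) :
    ‖NormedSpace.exp (r • E)‖ ≤ ‖(1 : R)‖ + ‖E‖ := by
  rw [exp_smul_of_sq_eq_neg_one hE]
  refine (norm_add_le _ _).trans (add_le_add ?_ ?_) <;> rw [norm_smul, Real.norm_eq_abs]
  · exact mul_le_of_le_one_left (norm_nonneg _) (Real.abs_cos_le_one r)
  · exact mul_le_of_le_one_left (norm_nonneg _) (Real.abs_sin_le_one r)

end SqrtNegOne

section cPart

variable {R : Type*} [NormedRing R] [NormedAlgebra ℝ R]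

theorem cPart_eq_smul (E : R) (s : Fin 2) (A : R) :
    cPart E s A = (2 : ℝ)⁻¹ • (A + (-1 : ℝ) ^ (s : ℕ) • (Ring.inverse E * A * E)) := by
  have hsign : (-1 : R) ^ (s : ℕ) = algebraMap ℝ R ((-1) ^ (s : ℕ)) := by simp
  rw [cPart, hsign, ← Algebra.smul_def]

theorem cPart_zero_add_cPart_one (E A : R) : cPart E 0 A + cPart E 1 A = A := by
  simp only [cPart_eq_smul, Fin.val_zero, Fin.val_one, pow_zero, pow_one]
  module

theorem cPart_mul_left {E W : R} (h : Commute W E) (s : Fin 2) (A : R) :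
    cPart E s (W * A) = W * cPart E s A := by
  have hW : Ring.inverse E * (W * A) * E = W * (Ring.inverse E * A * E) := by
    simp only [← mul_assoc, h.symm.ringInverse_left.eq]
  rw [cPart_eq_smul, cPart_eq_smul, hW, mul_smul_comm, mul_add, mul_smul_comm]

theorem cPart_mul_right {E W : R} (h : Commute W E) (s : Fin 2) (A : R) :
    cPart E s (A * W) = cPart E s A * W := by
  have hW : Ring.inverse E * (A * W) * E = Ring.inverse E * A * E * W := by
    simp only [mul_assoc, h.eq]
  rw [cPart_eq_smul, cPart_eq_smul, hW, smul_mul_assoc, add_mul, smul_mul_assoc]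

theorem SemiconjBy.cPart {A F G E : R} (hA : SemiconjBy A F G) (hF : Commute E F)
    (hG : Commute E G) (s : Fin 2) : SemiconjBy (cPart E s A) F G := by
  rw [cPart_eq_smul]
  have hEAE : SemiconjBy (Ring.inverse E * A * E) F G :=
    (SemiconjBy.mul_left hG.ringInverse_left hA).mul_left hF
  exact (hA.add_left (hEAE.smul_left _)).smul_left _

theorem semiconjBy_cPart_self {E : R} (hE : E ^ 2 = -1) (s : Fin 2) (A : R) :
    SemiconjBy (cPart E s A) E ((-1 : ℝ) ^ (s : ℕ) • E) := by
  have hEE : E * E = -1 := by rw [← sq, hE]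
  have hEEX : ∀ X, E * (E * X) = -X := fun X => by rw [← mul_assoc, hEE, neg_one_mul]
  rw [cPart_eq_smul, Ring.inverse_eq_neg_of_sq_eq_neg_one hE, SemiconjBy]
  fin_cases s <;>
    simp only [smul_mul_assoc, mul_smul_comm, add_mul, mul_add, neg_mul, mul_neg, mul_assoc,
      hEE, hEEX, mul_one] <;> module

end cPart

section cIter

variable {R : Type*} [NormedRing R] [NormedAlgebra ℝ R] {d : ℕ}

theorem cIter_cons (p : R × Fin 2) (L : List (R × Fin 2)) (A : R) :
    cIter (p :: L) A = cIter L (cPart p.1 p.2 A) := rfl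

theorem cIter_mul_left {W : R} {L : List (R × Fin 2)} (h : ∀ p ∈ L, Commute W p.1) (A : R) :
    cIter L (W * A) = W * cIter L A := by
  induction L generalizing A with
  | nil => rfl
  | cons q L ih =>
    rw [List.forall_mem_cons] at h
    rw [cIter_cons, cIter_cons, cPart_mul_left h.1, ih h.2]

theorem cIter_mul_right {W : R} {L : List (R × Fin 2)} (h : ∀ p ∈ L, Commute W p.1) (A : R) :
    cIter L (A * W) = cIter L A * W := by
  induction L generalizing A with
  | nil => rfl
  | cons q L ih =>
    rw [List.forall_mem_cons] at h
    rw [cIter_cons, cIter_cons, cPart_mul_right h.1, ih h.2]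

theorem SemiconjBy.cIter {A F G : R} (hA : SemiconjBy A F G) {L : List (R × Fin 2)}
    (h : ∀ p ∈ L, Commute p.1 F ∧ Commute p.1 G) : SemiconjBy (cIter L A) F G := by
  induction L generalizing A with
  | nil => exact hA
  | cons q L ih =>
    rw [List.forall_mem_cons] at h
    exact ih (hA.cPart h.1.1 h.1.2 q.2) h.2

theorem semiconjBy_cIter_of_mem {L : List (R × Fin 2)} (hsq : ∀ p ∈ L, p.1 ^ 2 = -1)
    (hc : ∀ p ∈ L, ∀ q ∈ L, Commute p.1 q.1) (A : R) {p : R × Fin 2} (hp : p ∈ L) :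
    SemiconjBy (cIter L A) p.1 ((-1 : ℝ) ^ (p.2 : ℕ) • p.1) := by
  induction L generalizing A with
  | nil => simp at hp
  | cons q L ih =>
    rw [cIter_cons]
    rcases List.mem_cons.mp hp with rfl | hp
    · refine (semiconjBy_cPart_self (hsq p List.mem_cons_self) p.2 A).cIter fun r hr => ?_
      have hrp := hc r (List.mem_cons_of_mem p hr) p List.mem_cons_self
      exact ⟨hrp, hrp.smul_right _⟩
    · exact ih (fun r hr => hsq r (List.mem_cons_of_mem q hr))
        (fun r hr t ht => hc r (List.mem_cons_of_mem q hr) t (List.mem_cons_of_mem q ht)) _ hp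

theorem sum_cIter_ofFn (ε : Fin d → R) (A : R) :
    ∑ b : Fin d → Fin 2, cIter (List.ofFn fun l => (ε l, b l)) A = A := by
  induction d generalizing A with
  | zero => simp [cIter]
  | succ d ih =>
    rw [← (Fin.consEquiv fun _ => Fin 2).sum_comp, Fintype.sum_prod_type, Fin.sum_univ_two]
    simp only [Fin.consEquiv_apply, List.ofFn_succ, Fin.cons_zero, Fin.cons_succ, cIter_cons, ih]
    exact cPart_zero_add_cPart_one _ _

/-- `signs j * r` is the coefficient vector of the sign-flipped list `F(j)`. -/
def signs (σ : Fin d → Fin 2) : Fin d → ℝ := fun l => (-1) ^ (σ l : ℕ)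

theorem signs_mul_signs_mul (σ : Fin d → Fin 2) (r : Fin d → ℝ) :
    signs σ * (signs σ * r) = r := by
  ext l
  simp [signs, ← mul_assoc, ← mul_pow]

theorem semiconjBy_cIter_ofFn {ε : Fin d → R} (hsq : ∀ l, ε l ^ 2 = -1)
    (hc : ∀ l k, Commute (ε l) (ε k)) (b : Fin d → Fin 2) (A : R) (l : Fin d) :
    SemiconjBy (cIter (List.ofFn fun l => (ε l, b l)) A) (ε l) (signs b l • ε l) :=
  semiconjBy_cIter_of_mem (List.forall_mem_ofFn_iff.mpr hsq)
    (List.forall_mem_ofFn_iff.mpr fun l => List.forall_mem_ofFn_iff.mpr (hc l)) A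
    (List.mem_ofFn.mpr ⟨l, rfl⟩)

def cPartCLM (E : R) (s : Fin 2) : R →L[ℝ] R :=
  (2 : ℝ)⁻¹ • (ContinuousLinearMap.id ℝ R + (-1 : ℝ) ^ (s : ℕ) •
    ((ContinuousLinearMap.mul ℝ R).flip E).comp (ContinuousLinearMap.mul ℝ R (Ring.inverse E)))

theorem cPartCLM_apply (E : R) (s : Fin 2) (A : R) : cPartCLM E s A = cPart E s A := by
  simp [cPartCLM, cPart_eq_smul]

def cIterCLM : List (R × Fin 2) → R →L[ℝ] R
  | [] => ContinuousLinearMap.id ℝ R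
  | p :: L => (cIterCLM L).comp (cPartCLM p.1 p.2)

theorem cIterCLM_apply (L : List (R × Fin 2)) (A : R) : cIterCLM L A = cIter L A := by
  induction L generalizing A with
  | nil => rfl
  | cons p L ih => simp [cIterCLM, cIter_cons, cPartCLM_apply, ih]

end cIter

section oprod

variable {R : Type*} [NormedRing R] {d : ℕ}

theorem oprod_succ (a : Fin (d + 1) → R) : oprod a = a 0 * oprod fun l => a l.succ := by
  rw [oprod, List.ofFn_succ, List.prod_cons, oprod]

theorem SemiconjBy.oprod {P : R} {a b : Fin d → R} (h : ∀ l, SemiconjBy P (a l) (b l)) :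
    SemiconjBy P (oprod a) (oprod b) := by
  induction d with
  | zero => exact SemiconjBy.one_right P
  | succ d ih =>
    rw [oprod_succ a, oprod_succ b]
    exact (h 0).mul_right (ih fun l => h l.succ)

theorem oprod_mul {a b : Fin d → R} (h : ∀ l k, Commute (a l) (b k)) :
    oprod (fun l => a l * b l) = oprod a * oprod b := by
  induction d with
  | zero => simp [oprod]
  | succ d ih =>
    have hb : Commute (b 0) (oprod fun l => a l.succ) := SemiconjBy.oprod fun l => (h l.succ 0).symm
    rw [oprod_succ, oprod_succ a, oprod_succ b, ih fun l k => h l.succ k.succ]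
    simp only [mul_assoc, hb.left_comm]

theorem norm_oprod_le {a : Fin d → R} {c : Fin d → ℝ} (h : ∀ l, ‖a l‖ ≤ c l) :
    ‖oprod a‖ ≤ ‖(1 : R)‖ * ∏ l, c l := by
  induction d with
  | zero => simp [oprod]
  | succ d ih =>
    rw [oprod_succ, Fin.prod_univ_succ, mul_left_comm]
    exact (norm_mul_le _ _).trans <|
      mul_le_mul (h 0) (ih fun l => h l.succ) (norm_nonneg _) ((norm_nonneg _).trans (h 0))

theorem continuous_oprod {X : Type*} [TopologicalSpace X] {a : Fin d → X → R}
    (h : ∀ l, Continuous (a l)) : Continuous fun x => oprod fun l => a l x := by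
  simp only [oprod, List.ofFn_eq_map]
  exact continuous_list_prod _ fun l _ => h l

end oprod

section Kernel

variable {R : Type*} [NormedRing R] [NormedAlgebra ℝ R] {d : ℕ}

def gftKernel (r : Fin d → ℝ) (ε : Fin d → R) : R :=
  oprod fun l => NormedSpace.exp (-(r l • ε l))

theorem norm_gftKernel_le {ε : Fin d → R} (hε : ∀ l, ε l ^ 2 = -1) (r : Fin d → ℝ) :
    ‖gftKernel r ε‖ ≤ ‖(1 : R)‖ * ∏ l, (‖(1 : R)‖ + ‖ε l‖) :=
  norm_oprod_le fun l => by
    rw [← neg_smul]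
    exact NormedSpace.norm_exp_smul_le_of_sq_eq_neg_one (hε l) _

theorem Commute.gftKernel {P : R} {ε : Fin d → R} (h : ∀ l, Commute P (ε l)) (r : Fin d → ℝ) :
    Commute P (gftKernel r ε) :=
  let : NormedAlgebra ℚ R := .restrictScalars ℚ ℝ R
  SemiconjBy.oprod fun l => ((h l).smul_right (r l)).neg_right.exp_right

theorem cIter_ofFn_gftKernel_mul {ε : Fin d → R} (hc : ∀ l k, Commute (ε l) (ε k))
    (b : Fin d → Fin 2) (r : Fin d → ℝ) (A : R) :
    cIter (List.ofFn fun l => (ε l, b l)) (gftKernel r ε * A) =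
      gftKernel r ε * cIter (List.ofFn fun l => (ε l, b l)) A :=
  cIter_mul_left (List.forall_mem_ofFn_iff.mpr fun l => (Commute.gftKernel (hc l) r).symm) A

theorem cIter_ofFn_mul_gftKernel {ε : Fin d → R} (hc : ∀ l k, Commute (ε l) (ε k))
    (b : Fin d → Fin 2) (r : Fin d → ℝ) (A : R) :
    cIter (List.ofFn fun l => (ε l, b l)) (A * gftKernel r ε) =
      cIter (List.ofFn fun l => (ε l, b l)) A * gftKernel r ε :=
  cIter_mul_right (List.forall_mem_ofFn_iff.mpr fun l => (Commute.gftKernel (hc l) r).symm) A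

end Kernel

section

variable {d : ℕ}

theorem continuous_gftKernel {X : Type*} [TopologicalSpace X] {r : X → Fin d → ℝ}
    (hr : Continuous r) (ε : Fin d → 𝔸) : Continuous fun x => gftKernel (r x) ε := by
  let : NormedAlgebra ℚ 𝔸 := .restrictScalars ℚ ℝ 𝔸
  exact continuous_oprod fun l =>
    NormedSpace.exp_continuous.comp (((continuous_apply l).comp hr).smul continuous_const).neg

theorem gftKernel_add {ε : Fin d → 𝔸} (hε : ∀ l k, Commute (ε l) (ε k))
    (r r' : Fin d → ℝ) : gftKernel (r + r') ε = gftKernel r ε * gftKernel r' ε := by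
  let : NormedAlgebra ℚ 𝔸 := .restrictScalars ℚ ℝ 𝔸
  have hexp : ∀ l, NormedSpace.exp (-((r + r') l • ε l)) =
      NormedSpace.exp (-(r l • ε l)) * NormedSpace.exp (-(r' l • ε l)) := fun l => by
    rw [Pi.add_apply, add_smul, neg_add]
    exact NormedSpace.exp_add_of_commute
      (((Commute.refl _).smul_left _).smul_right _).neg_left.neg_right
  rw [gftKernel, funext hexp]
  exact oprod_mul fun l k => (((hε l k).smul_left _).smul_right _).neg_left.neg_right.exp

theorem SemiconjBy.gftKernel {P : 𝔸} {ε : Fin d → 𝔸} {c : Fin d → ℝ}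
    (h : ∀ l, SemiconjBy P (ε l) (c l • ε l)) (r : Fin d → ℝ) :
    SemiconjBy P (gftKernel r ε) (gftKernel (c * r) ε) :=
  let : NormedAlgebra ℚ 𝔸 := .restrictScalars ℚ ℝ 𝔸
  SemiconjBy.oprod fun l => by
    simpa only [Pi.mul_apply, mul_comm (c l), mul_smul] using
      ((h l).smul_right (r l)).neg_right.exp_right

end

section Decomposition

variable {d : ℕ} {ε : Fin d → 𝔸}

theorem gftKernel_mul_eq_sum (hsq : ∀ l, ε l ^ 2 = -1) (hc : ∀ l k, Commute (ε l) (ε k))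
    (r : Fin d → ℝ) (A : 𝔸) :
    gftKernel r ε * A =
      ∑ b : Fin d → Fin 2, cIter (List.ofFn fun l => (ε l, b l)) A * gftKernel (signs b * r) ε := by
  conv_lhs => rw [← sum_cIter_ofFn ε A]
  rw [Finset.mul_sum]
  refine Finset.sum_congr rfl fun b _ => ?_
  have h := SemiconjBy.gftKernel (semiconjBy_cIter_ofFn hsq hc b A) (signs b * r)
  rw [signs_mul_signs_mul] at h
  exact h.eq.symm

theorem mul_gftKernel_eq_sum (hsq : ∀ l, ε l ^ 2 = -1) (hc : ∀ l k, Commute (ε l) (ε k))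
    (r : Fin d → ℝ) (A : 𝔸) :
    A * gftKernel r ε =
      ∑ b : Fin d → Fin 2, gftKernel (signs b * r) ε * cIter (List.ofFn fun l => (ε l, b l)) A := by
  conv_lhs => rw [← sum_cIter_ofFn ε A]
  rw [Finset.sum_mul]
  exact Finset.sum_congr rfl fun b _ =>
    (SemiconjBy.gftKernel (semiconjBy_cIter_ofFn hsq hc b A) r).eq

end Decomposition

section PointwiseExpansion

variable {d₁ d₂ : ℕ} {e : Fin d₁ → 𝔸} {g : Fin d₂ → 𝔸}

theorem gftKernel_mul_mul_eq_sum_cIter_left (he : ∀ l, e l ^ 2 = -1)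
    (hec : ∀ l k, Commute (e l) (e k)) (hg : ∀ l, g l ^ 2 = -1) (hgc : ∀ l k, Commute (g l) (g k))
    (r r' : Fin d₁ → ℝ) (s s' : Fin d₂ → ℝ) (a b : 𝔸) :
    gftKernel r e * gftKernel r' e * (a * b) * (gftKernel s g * gftKernel s' g) =
      ∑ j : Fin d₁ → Fin 2, ∑ k : Fin d₂ → Fin 2,
        cIter (List.ofFn fun l => (e l, j l)) (gftKernel r e * a * gftKernel (signs k * s) g) *
          (gftKernel (signs j * r') e * cIter (List.ofFn fun l => (g l, k l)) b *
            gftKernel s' g) := by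
  calc _ = gftKernel r e * (gftKernel r' e * a * (b * gftKernel s g)) * gftKernel s' g := by
        simp only [mul_assoc]
    _ = ∑ k : Fin d₂ → Fin 2, gftKernel r e * (gftKernel r' e * (a * gftKernel (signs k * s) g)) *
          (cIter (List.ofFn fun l => (g l, k l)) b * gftKernel s' g) := by
        rw [mul_gftKernel_eq_sum hg hgc s b]
        simp only [Finset.mul_sum, Finset.sum_mul, mul_assoc]
    _ = _ := by
        simp only [gftKernel_mul_eq_sum he hec r', Finset.mul_sum, Finset.sum_mul]
        rw [Finset.sum_comm]
        refine Finset.sum_congr rfl fun j _ => Finset.sum_congr rfl fun k _ => ?_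
        rw [mul_assoc (gftKernel r e) a, cIter_ofFn_gftKernel_mul hec]
        simp only [mul_assoc]

theorem gftKernel_mul_mul_eq_sum_cIter_right (he : ∀ l, e l ^ 2 = -1)
    (hec : ∀ l k, Commute (e l) (e k)) (hg : ∀ l, g l ^ 2 = -1) (hgc : ∀ l k, Commute (g l) (g k))
    (r r' : Fin d₁ → ℝ) (s s' : Fin d₂ → ℝ) (a b : 𝔸) :
    gftKernel r e * gftKernel r' e * (a * b) * (gftKernel s g * gftKernel s' g) =
      ∑ j : Fin d₁ → Fin 2, ∑ k : Fin d₂ → Fin 2,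
        (gftKernel r e * cIter (List.ofFn fun l => (e l, j l)) a * gftKernel (signs k * s) g) *
          cIter (List.ofFn fun l => (g l, k l))
            (gftKernel (signs j * r') e * b * gftKernel s' g) := by
  calc _ = gftKernel r e * (gftKernel r' e * a) * (b * gftKernel s g) * gftKernel s' g := by
        simp only [mul_assoc]
    _ = ∑ j : Fin d₁ → Fin 2, gftKernel r e * cIter (List.ofFn fun l => (e l, j l)) a *
          ((gftKernel (signs j * r') e * b) * gftKernel s g) * gftKernel s' g := by
        rw [gftKernel_mul_eq_sum he hec r' a]
        simp only [Finset.mul_sum, Finset.sum_mul, mul_assoc]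
    _ = _ := by
        simp only [mul_gftKernel_eq_sum hg hgc s, Finset.mul_sum, Finset.sum_mul]
        refine Finset.sum_congr rfl fun j _ => Finset.sum_congr rfl fun k _ => ?_
        rw [cIter_ofFn_mul_gftKernel hgc]
        simp only [mul_assoc]

end PointwiseExpansion

theorem MeasureTheory.Integrable.bdd_mul_mul {R X : Type*} [NormedRing R] [MeasurableSpace X]
    {μ : Measure X} {K₁ K₂ F : X → R} {c₁ c₂ : ℝ} (hF : Integrable F μ)
    (hK₁ : AEStronglyMeasurable K₁ μ) (hK₂ : AEStronglyMeasurable K₂ μ) (hb₁ : ∀ x, ‖K₁ x‖ ≤ c₁)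
    (hb₂ : ∀ x, ‖K₂ x‖ ≤ c₂) :
    Integrable (fun x => K₁ x * F x * K₂ x) μ :=
  (hF.bdd_mul hK₁ (ae_of_all _ hb₁)).mul_bdd hK₂ (ae_of_all _ hb₂)

section Integration

variable {R : Type*} [NormedRing R] [NormedAlgebra ℝ R]

theorem integral_integral_sum_mul {X Y ι : Type*} [MeasurableSpace X] [MeasurableSpace Y]
    {μ : Measure X} {ν : Measure Y} (s : Finset ι) {F : ι → X → R} {G : ι → Y → R}
    (hF : ∀ i ∈ s, Integrable (F i) μ) (hG : ∀ i ∈ s, Integrable (G i) ν) :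
    ∫ x, ∫ y, ∑ i ∈ s, F i x * G i y ∂ν ∂μ = ∑ i ∈ s, (∫ x, F i x ∂μ) * ∫ y, G i y ∂ν := by
  calc _ = ∫ x, ∑ i ∈ s, F i x * ∫ y, G i y ∂ν ∂μ := by
        refine integral_congr_ae (ae_of_all _ fun x => ?_)
        dsimp only
        rw [integral_finsetSum s fun i hi => (hG i hi).const_mul _]
        exact Finset.sum_congr rfl fun i hi => integral_const_mul_of_integrable (hG i hi)
    _ = _ := by
        rw [integral_finsetSum s fun i hi => (hF i hi).mul_const _]
        exact Finset.sum_congr rfl fun i hi => integral_mul_const_of_integrable (hF i hi)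

theorem integral_mul_convolution_mul {G : Type*} [AddGroup G] [MeasurableSpace G]
    [MeasurableAdd₂ G] [MeasurableNeg G] {μ : Measure G} [SFinite μ] [μ.IsAddRightInvariant]
    {K₁ K₂ C B : G → R} {c₁ c₂ : ℝ} (hK₁ : StronglyMeasurable K₁) (hK₂ : StronglyMeasurable K₂)
    (hb₁ : ∀ x, ‖K₁ x‖ ≤ c₁) (hb₂ : ∀ x, ‖K₂ x‖ ≤ c₂)
    (hadd₁ : ∀ x y, K₁ (x + y) = K₁ y * K₁ x) (hadd₂ : ∀ x y, K₂ (x + y) = K₂ y * K₂ x)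
    (hC : Integrable C μ) (hB : Integrable B μ) :
    ∫ x, K₁ x * (∫ y, C y * B (x - y) ∂μ) * K₂ x ∂μ =
      ∫ y, ∫ x, K₁ y * K₁ x * (C y * B x) * (K₂ y * K₂ x) ∂μ ∂μ := by
  have hconv : Integrable (fun p : G × G => C p.2 * B (p.1 - p.2)) (μ.prod μ) := by
    simpa using hC.convolution_integrand (ContinuousLinearMap.mul ℝ R) hB
  have hprod : Integrable (Function.uncurry fun x y => K₁ x * (C y * B (x - y)) * K₂ x)
      (μ.prod μ) :=
    hconv.bdd_mul_mul (hK₁.comp_measurable measurable_fst).aestronglyMeasurable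
      (hK₂.comp_measurable measurable_fst).aestronglyMeasurable (fun p => hb₁ p.1)
      (fun p => hb₂ p.1)
  have hinner : ∀ᵐ x ∂μ, K₁ x * (∫ y, C y * B (x - y) ∂μ) * K₂ x =
      ∫ y, K₁ x * (C y * B (x - y)) * K₂ x ∂μ := by
    filter_upwards [hC.ae_convolution_exists (ContinuousLinearMap.mul ℝ R) hB] with x hx
    have hx' : Integrable (fun y => C y * B (x - y)) μ := by simpa [ConvolutionExistsAt] using hx
    rw [integral_mul_const_of_integrable (hx'.const_mul _), integral_const_mul_of_integrable hx']
  rw [integral_congr_ae hinner, integral_integral_swap hprod]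
  refine integral_congr_ae (ae_of_all _ fun y => ?_)
  dsimp only
  rw [← integral_add_right_eq_self _ y]
  simp only [add_sub_cancel_right, hadd₁, hadd₂]

end Integration

section cIterIntegral

variable {X : Type*} [MeasurableSpace X] {μ : Measure X}

theorem MeasureTheory.Integrable.cIter {R : Type*} [NormedRing R] [NormedAlgebra ℝ R] {F : X → R}
    (hF : Integrable F μ) (L : List (R × Fin 2)) : Integrable (fun x => cIter L (F x)) μ := by
  simpa only [cIterCLM_apply] using (cIterCLM L).integrable_comp hF

theorem integral_cIter {F : X → 𝔸} (hF : Integrable F μ) (L : List (𝔸 × Fin 2)) :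
    ∫ x, cIter L (F x) ∂μ = cIter L (∫ x, F x ∂μ) := by
  simpa only [cIterCLM_apply] using (cIterCLM L).integral_comp_comm hF

end cIterIntegral

section KernelGFT

variable {V : Type*} [NormedAddCommGroup V] [NormedSpace ℝ V] [FiniteDimensional ℝ V]
  [MeasurableSpace V] [BorelSpace V] {μ : Measure V} {d₁ d₂ : ℕ}

/-- `gft ρ1 i1 ρ2 i2 A u` is definitionally `kernelGFT volume (fun x l => ρ1 l x u)
(fun l => i1 l u) (fun x l => ρ2 l x u) (fun l => i2 l u) A`. -/
def kernelGFT {R : Type*} [NormedRing R] [NormedAlgebra ℝ R] (μ : Measure V)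
    (r₁ : V → Fin d₁ → ℝ) (e : Fin d₁ → R) (r₂ : V → Fin d₂ → ℝ) (g : Fin d₂ → R) (F : V → R) : R :=
  ∫ x, gftKernel (r₁ x) e * F x * gftKernel (r₂ x) g ∂μ

theorem MeasureTheory.Integrable.gftKernel_mul_mul {e : Fin d₁ → 𝔸} {g : Fin d₂ → 𝔸}
    (he : ∀ l, e l ^ 2 = -1) (hg : ∀ l, g l ^ 2 = -1) {r₁ : V → Fin d₁ → ℝ} {r₂ : V → Fin d₂ → ℝ}
    (hr₁ : Continuous r₁) (hr₂ : Continuous r₂) {F : V → 𝔸} (hF : Integrable F μ) :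
    Integrable (fun x => gftKernel (r₁ x) e * F x * gftKernel (r₂ x) g) μ :=
  hF.bdd_mul_mul (continuous_gftKernel hr₁ e).aestronglyMeasurable
    (continuous_gftKernel hr₂ g).aestronglyMeasurable (fun x => norm_gftKernel_le he (r₁ x))
    (fun x => norm_gftKernel_le hg (r₂ x))

variable [SFinite μ] [μ.IsAddRightInvariant] {e : Fin d₁ → 𝔸} {g : Fin d₂ → 𝔸}

theorem kernelGFT_convolution_eq_integral_integral (he : ∀ l, e l ^ 2 = -1)
    (hec : ∀ l k, Commute (e l) (e k)) (hg : ∀ l, g l ^ 2 = -1) (hgc : ∀ l k, Commute (g l) (g k))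
    (r₁ : V →ₗ[ℝ] Fin d₁ → ℝ) (r₂ : V →ₗ[ℝ] Fin d₂ → ℝ) {C B : V → 𝔸} (hC : Integrable C μ)
    (hB : Integrable B μ) :
    kernelGFT μ r₁ e r₂ g (fun x => ∫ y, C y * B (x - y) ∂μ) =
      ∫ y, ∫ x, gftKernel (r₁ y) e * gftKernel (r₁ x) e * (C y * B x) *
        (gftKernel (r₂ y) g * gftKernel (r₂ x) g) ∂μ ∂μ :=
  integral_mul_convolution_mul
    (continuous_gftKernel r₁.continuous_of_finiteDimensional e).stronglyMeasurable
    (continuous_gftKernel r₂.continuous_of_finiteDimensional g).stronglyMeasurable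
    (fun x => norm_gftKernel_le he (r₁ x)) (fun x => norm_gftKernel_le hg (r₂ x))
    (fun x y => by rw [map_add, add_comm, gftKernel_add hec])
    (fun x y => by rw [map_add, add_comm, gftKernel_add hgc]) hC hB

theorem kernelGFT_convolution_eq_sum_cIter_mul (he : ∀ l, e l ^ 2 = -1)
    (hec : ∀ l k, Commute (e l) (e k)) (hg : ∀ l, g l ^ 2 = -1) (hgc : ∀ l k, Commute (g l) (g k))
    (r₁ : V →ₗ[ℝ] Fin d₁ → ℝ) (r₂ : V →ₗ[ℝ] Fin d₂ → ℝ) {C B : V → 𝔸} (hC : Integrable C μ)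
    (hB : Integrable B μ) :
    kernelGFT μ r₁ e r₂ g (fun x => ∫ y, C y * B (x - y) ∂μ) =
      ∑ j : Fin d₁ → Fin 2, ∑ k : Fin d₂ → Fin 2,
        cIter (List.ofFn fun l => (e l, j l)) (kernelGFT μ r₁ e (fun x => signs k * r₂ x) g C) *
          kernelGFT μ (fun x => signs j * r₁ x) e r₂ g
            (fun z => cIter (List.ofFn fun l => (g l, k l)) (B z)) := by
  have hr₁ := r₁.continuous_of_finiteDimensional
  have hr₂ := r₂.continuous_of_finiteDimensional
  have hs₁ : ∀ j, Continuous fun x => signs j * r₁ x := fun j => continuous_const.mul hr₁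
  have hs₂ : ∀ k, Continuous fun x => signs k * r₂ x := fun k => continuous_const.mul hr₂
  rw [kernelGFT_convolution_eq_integral_integral he hec hg hgc r₁ r₂ hC hB]
  simp only [gftKernel_mul_mul_eq_sum_cIter_left he hec hg hgc, ← Fintype.sum_prod_type']
  rw [integral_integral_sum_mul _
    (fun p _ => ((hC.gftKernel_mul_mul he hg hr₁ (hs₂ p.2)).cIter _))
    (fun p _ => ((hB.cIter _).gftKernel_mul_mul he hg (hs₁ p.1) hr₂))]
  refine Finset.sum_congr rfl fun p _ => ?_
  rw [integral_cIter (hC.gftKernel_mul_mul he hg hr₁ (hs₂ p.2))]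
  rfl

theorem kernelGFT_convolution_eq_sum_mul_cIter (he : ∀ l, e l ^ 2 = -1)
    (hec : ∀ l k, Commute (e l) (e k)) (hg : ∀ l, g l ^ 2 = -1) (hgc : ∀ l k, Commute (g l) (g k))
    (r₁ : V →ₗ[ℝ] Fin d₁ → ℝ) (r₂ : V →ₗ[ℝ] Fin d₂ → ℝ) {C B : V → 𝔸} (hC : Integrable C μ)
    (hB : Integrable B μ) :
    kernelGFT μ r₁ e r₂ g (fun x => ∫ y, C y * B (x - y) ∂μ) =
      ∑ j : Fin d₁ → Fin 2, ∑ k : Fin d₂ → Fin 2,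
        kernelGFT μ r₁ e (fun x => signs k * r₂ x) g
            (fun z => cIter (List.ofFn fun l => (e l, j l)) (C z)) *
          cIter (List.ofFn fun l => (g l, k l))
            (kernelGFT μ (fun x => signs j * r₁ x) e r₂ g B) := by
  have hr₁ := r₁.continuous_of_finiteDimensional
  have hr₂ := r₂.continuous_of_finiteDimensional
  have hs₁ : ∀ j, Continuous fun x => signs j * r₁ x := fun j => continuous_const.mul hr₁
  have hs₂ : ∀ k, Continuous fun x => signs k * r₂ x := fun k => continuous_const.mul hr₂
  rw [kernelGFT_convolution_eq_integral_integral he hec hg hgc r₁ r₂ hC hB]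
  simp only [gftKernel_mul_mul_eq_sum_cIter_right he hec hg hgc, ← Fintype.sum_prod_type']
  rw [integral_integral_sum_mul _
    (fun p _ => ((hC.cIter _).gftKernel_mul_mul he hg hr₁ (hs₂ p.2)))
    (fun p _ => ((hB.gftKernel_mul_mul he hg (hs₁ p.1) hr₂).cIter _))]
  refine Finset.sum_congr rfl fun p _ => ?_
  rw [integral_cIter (hB.gftKernel_mul_mul he hg (hs₁ p.1) hr₂)]
  rfl

end KernelGFT

/-- Convolution theorem for a GFT whose directions commute pointwise within each of the two
kernel lists (cross commutativity between the lists is not required). -/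
theorem gft_convolution_commutative {m μ ν' : ℕ}
    (ρ1 : Fin μ → (Fin m → ℝ) → (Fin m → ℝ) → ℝ) (i1 : Fin μ → (Fin m → ℝ) → 𝔸)
    (ρ2 : Fin ν' → (Fin m → ℝ) → (Fin m → ℝ) → ℝ) (i2 : Fin ν' → (Fin m → ℝ) → 𝔸)
    (hi1 : ∀ l u, i1 l u ^ 2 = -1) (hi2 : ∀ l u, i2 l u ^ 2 = -1)
    (hlin1 : ∀ l u, IsLinearMap ℝ (fun x => ρ1 l x u))
    (hlin2 : ∀ l u, IsLinearMap ℝ (fun x => ρ2 l x u))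
    (hcomm1 : ∀ u l k, i1 l u * i1 k u = i1 k u * i1 l u)
    (hcomm2 : ∀ u l k, i2 l u * i2 k u = i2 k u * i2 l u)
    (C B : (Fin m → ℝ) → 𝔸) (hC : Integrable C) (hB : Integrable B)
    (A : (Fin m → ℝ) → 𝔸) (hA : ∀ x, A x = ∫ y : Fin m → ℝ, C y * B (x - y))
    (u : Fin m → ℝ) :
    gft ρ1 i1 ρ2 i2 A u =
      (∑ j' : Fin μ → Fin 2, ∑ k' : Fin ν' → Fin 2,
        cIter (List.ofFn (fun l => (i1 l u, j' l)))
            (gft ρ1 i1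
              (fun l x w => (-1 : ℝ) ^ ((k' l : ℕ)) * ρ2 l x w) i2 C u) *
          gft (fun l x w => (-1 : ℝ) ^ ((j' l : ℕ)) * ρ1 l x w) i1 ρ2 i2
            (fun z => cIter (List.ofFn (fun l => (i2 l u, k' l))) (B z)) u) ∧
    gft ρ1 i1 ρ2 i2 A u =
      (∑ j' : Fin μ → Fin 2, ∑ k' : Fin ν' → Fin 2,
        gft ρ1 i1 (fun l x w => (-1 : ℝ) ^ ((k' l : ℕ)) * ρ2 l x w) i2
            (fun z => cIter (List.ofFn (fun l => (i1 l u, j' l))) (C z)) u *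
          cIter (List.ofFn (fun l => (i2 l u, k' l)))
            (gft (fun l x w => (-1 : ℝ) ^ ((j' l : ℕ)) * ρ1 l x w) i1 ρ2 i2 B u)) := by
  obtain rfl : A = fun x => ∫ y, C y * B (x - y) := funext hA
  let r₁ : (Fin m → ℝ) →ₗ[ℝ] Fin μ → ℝ := LinearMap.pi fun l => IsLinearMap.mk' _ (hlin1 l u)
  let r₂ : (Fin m → ℝ) →ₗ[ℝ] Fin ν' → ℝ := LinearMap.pi fun l => IsLinearMap.mk' _ (hlin2 l u)
  exact ⟨kernelGFT_convolution_eq_sum_cIter_mul (fun l => hi1 l u) (hcomm1 u) (fun l => hi2 l u)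
      (hcomm2 u) r₁ r₂ hC hB,
    kernelGFT_convolution_eq_sum_mul_cIter (fun l => hi1 l u) (hcomm1 u) (fun l => hi2 l u)
      (hcomm2 u) r₁ r₂ hC hB⟩
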